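/- Let Λ be a finite set and B₁,…,B_d pairwise disjoint sets of ordered pairs from Λ (oriented bonds of d types) such that (Λ, B₁∪⋯∪B_d) is connected and supports a generalized height function, i.e. a map l = (l₁,…,l_d) : Λ → ℤ^d with l(y) = l(x) + e_i whenever (x,y) ∈ B_i. Fix a half-integer S ∈ {1/2, 1, 3/2, …} and anisotropies Δ₁,…,Δ_d ∈ [1,∞); let q_i ∈ (0,1] solve Δ_i = (q_i+q_i⁻¹)/2 and set A(Δ_i) = √(1−Δ_i⁻²). On ⨂_{x∈Λ} ℂ^{2S+1} define H = Σ_{i=1}^d Σ_{(x,y)∈B_i} h_{(x,y)}(Δ_i), where h_{(x,y)}(Δ) = S²·1 − S³_xS³_y − (1/(2Δ))(S⁺_xS⁻_y + S⁻_xS⁺_y) + S·A(Δ)(S³_x − S³_y). Then for every N ∈ {0,1,…,2S|Λ|}, the space of vectors ψ lying in the eigenspace of Σ_{x∈Λ} S³_x with eigenvalue S|Λ| − N and satisfying Hψ = 0 is exactly one-dimensional, spanned by Ψ₀(N) = Σ over (n_x) ∈ {0,1,…,2S}^Λ with Σ_x n_x = N of ∏_{x∈Λ} (q₁^{l₁(x)}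 ⋯ q_d^{l_d(x)})^{n_x} · binom(2S, n_x)^{1/2} · ⨂_{x∈Λ} |S − n_x⟩. -/

import Mathlib

open scoped Classical

noncomputable section

namespace S1

/-- Configurations of the spin-`S` system (`twoS = 2S`): at each site the basis vector
`|S − n_x⟩` is recorded by `n_x ∈ {0,…,2S}`. -/
abbrev QConf (Λ : Type*) (twoS : ℕ) := Λ → Fin (twoS + 1)

/-- The `S³`-value `m = S − n` of the local basis vector recorded by `n`. -/
def mv (twoS : ℕ) (n : Fin (twoS + 1)) : ℝ := (twoS : ℝ) / 2 - (n : ℕ)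

/-- The coefficient `√(S(S+1) − a(a+1))·√(S(S+1) − b(b−1))` of `S⁺ ⊗ S⁻` acting on
`|a⟩ ⊗ |b⟩`. -/
def hopCoeff (twoS : ℕ) (a b : ℝ) : ℝ :=
  Real.sqrt (((twoS : ℝ) / 2) * ((twoS : ℝ) / 2 + 1) - a * (a + 1)) *
    Real.sqrt (((twoS : ℝ) / 2) * ((twoS : ℝ) / 2 + 1) - b * (b - 1))

/-- Matrix (in the configuration basis) of the bond Hamiltonian
`h_{(x,y)}(Δ) = S²·1 − S³_xS³_y − (1/(2Δ))(S⁺_xS⁻_y + S⁻_xS⁺_y) + S·A(Δ)(S³_x − S³_y)`,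
where `A(Δ) = √(1 − Δ⁻²)` and the spin-`S` matrices are
`S³|m⟩ = m|m⟩`, `S^±|m⟩ = √(S(S+1) − m(m±1))|m±1⟩`. -/
def hXY {Λ : Type*} [Fintype Λ] [DecidableEq Λ] (twoS : ℕ) (Δ : ℝ) (x y : Λ) :
    Matrix (QConf Λ twoS) (QConf Λ twoS) ℂ :=
  fun c' c =>
    (((if c' = c then
        ((twoS : ℝ) / 2) ^ 2 - mv twoS (c x) * mv twoS (c y) +
          ((twoS : ℝ) / 2) * Real.sqrt (1 - Δ⁻¹ ^ 2) * (mv twoS (c x) - mv twoS (c y))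
      else 0) -
      (1 / (2 * Δ)) *
        ((if (∀ z, z ≠ x → z ≠ y → c' z = c z) ∧
              ((c' x : ℕ) + 1 = (c x : ℕ)) ∧ ((c' y : ℕ) = (c y : ℕ) + 1) then
            hopCoeff twoS (mv twoS (c x)) (mv twoS (c y))
          else 0) +
          (if (∀ z, z ≠ x → z ≠ y → c' z = c z) ∧
              ((c' x : ℕ) = (c x : ℕ) + 1) ∧ ((c' y : ℕ) + 1 = (c y : ℕ)) then
            hopCoeff twoS (mv twoS (c y)) (mv twoS (c x))
          else 0))) : ℝ)

/-- Matrix of the total third component of spin `Σ_{x∈Λ} S³_x`. -/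
def s3tot {Λ : Type*} [Fintype Λ] [DecidableEq Λ] (twoS : ℕ) :
    Matrix (QConf Λ twoS) (QConf Λ twoS) ℂ :=
  fun c' c => if c' = c then ((∑ x, mv twoS (c x) : ℝ) : ℂ) else 0

/-- The Alcaraz–Salinas–Wreszinski ground state
`Ψ₀(N) = Σ_{Σn_x = N} ∏_x (q₁^{l₁(x)}⋯q_d^{l_d(x)})^{n_x} binom(2S,n_x)^{1/2} |{S−n_x}⟩`. -/
def asw {Λ : Type*} [Fintype Λ] (twoS d : ℕ) (qs : Fin d → ℝ) (l : Λ → Fin d → ℤ)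
    (N : ℕ) : QConf Λ twoS → ℂ :=
  fun c =>
    if (∑ x, ((c x : ℕ))) = N then
      ((∏ x, ((∏ i, qs i ^ l x i) ^ ((c x : ℕ)) *
          Real.sqrt (Nat.choose twoS (c x)))) : ℝ)
    else 0

end S1

/-!
In the basis `⨂_x |S − n_x⟩` every matrix element of `H` is real, `H` is symmetric with
nonpositive off-diagonal entries, and it conserves `N = Σ_x n_x`. Every bond term annihilates
the positive vector `W(n) = ∏_x Q(x)^{n_x} binom(2S, n_x)^{1/2}`, `Q(x) = ∏_i q_i^{l_i(x)}`: on a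
bond `(x, y)` of type `i` the two hopping terms map `W` to `q_i⁻¹ (2S − n_x) n_y W` and
`q_i n_x (2S − n_y) W`, and with `Δ_i = (q_i + q_i⁻¹)/2`, `A(Δ_i) = (q_i⁻¹ − q_i)/(q_i + q_i⁻¹)`
these cancel the diagonal term.
For such a matrix `⟨w, H w⟩ = -½ Σ_{a,b} H_{ab} W_a W_b (w_a/W_a − w_b/W_b)²` is a sum of
nonnegative terms, so every zero-energy vector has `w/W` constant along nonzero entries of `H`.
Moving one quantum along a bond is such an entry, and on a connected graph these moves join any
two configurations with the same `N`; so in each sector the zero-energy space is spanned by the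
restriction of `W`, which is `Ψ₀(N)`.
-/

namespace S1

open Finset Matrix Relation

section PerronFrobenius

variable {n : Type*} [Fintype n] {H : Matrix n n ℝ} {W : n → ℝ}

theorem sum_sum_mul_sq_sub_div (hH : H.IsSymm) (hW : H *ᵥ W = 0) (hW0 : ∀ i, W i ≠ 0)
    (w : n → ℝ) :
    ∑ i, ∑ j, H i j * W i * W j * (w i / W i - w j / W j) ^ 2 = -2 * (w ⬝ᵥ H *ᵥ w) := by
  have hrow : ∀ i, ∑ j, H i j * W j = 0 := fun i => congrFun hW i
  have hcol : ∀ j, ∑ i, H i j * W i = 0 := fun j => by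
    simpa only [hH.apply] using hrow j
  calc ∑ i, ∑ j, H i j * W i * W j * (w i / W i - w j / W j) ^ 2
      = ∑ i, ∑ j, (w i ^ 2 / W i * (H i j * W j) + w j ^ 2 / W j * (H i j * W i)
          - 2 * (w i * (H i j * w j))) := by
        refine sum_congr rfl fun i _ => sum_congr rfl fun j _ => ?_
        field_simp [hW0 i, hW0 j]
        ring
    _ = ∑ i, w i ^ 2 / W i * ∑ j, H i j * W j + ∑ j, w j ^ 2 / W j * ∑ i, H i j * W i
          - 2 * ∑ i, w i * ∑ j, H i j * w j := by
        simp only [sum_add_distrib, sum_sub_distrib, mul_sum]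
        rw [sum_comm (f := fun i j => w j ^ 2 / W j * (H i j * W i))]
    _ = -2 * (w ⬝ᵥ H *ᵥ w) := by simp [hrow, hcol, dotProduct, mulVec]

theorem div_eq_div_of_mulVec_eq_zero (hH : H.IsSymm) (hoff : ∀ i j, i ≠ j → H i j ≤ 0)
    (hWpos : ∀ i, 0 < W i) (hW : H *ᵥ W = 0) {w : n → ℝ} (hw : H *ᵥ w = 0) {i j : n}
    (hij : H i j ≠ 0) : w i / W i = w j / W j := by
  have hnonpos : ∀ a b, H a b * W a * W b * (w a / W a - w b / W b) ^ 2 ≤ 0 := by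
    intro a b
    rcases eq_or_ne a b with rfl | hab
    · simp
    · exact mul_nonpos_of_nonpos_of_nonneg
        (mul_nonpos_of_nonpos_of_nonneg (mul_nonpos_of_nonpos_of_nonneg (hoff a b hab)
          (hWpos a).le) (hWpos b).le) (sq_nonneg _)
  have hsum := sum_sum_mul_sq_sub_div hH hW (fun a => (hWpos a).ne') w
  rw [hw, dotProduct_zero, mul_zero] at hsum
  have hterm : H i j * W i * W j * (w i / W i - w j / W j) ^ 2 = 0 :=
    (sum_eq_zero_iff_of_nonpos fun b _ => hnonpos i b).mp
      ((sum_eq_zero_iff_of_nonpos fun a _ => sum_nonpos fun b _ => hnonpos a b).mp hsum i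
        (mem_univ i)) j (mem_univ j)
  have hcoef : H i j * W i * W j ≠ 0 := by
    have := hWpos i
    have := hWpos j
    positivity
  simpa [hcoef, sub_eq_zero] using hterm

theorem mulVec_re_eq_zero_of_map {w : n → ℂ} (hw : H.map (↑) *ᵥ w = 0) :
    H *ᵥ (fun a => (w a).re) = 0 := by
  ext i
  simpa [mulVec, dotProduct, Complex.re_sum] using congrArg Complex.re (congrFun hw i)

theorem mulVec_im_eq_zero_of_map {w : n → ℂ} (hw : H.map (↑) *ᵥ w = 0) :
    H *ᵥ (fun a => (w a).im) = 0 := by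
  ext i
  simpa [mulVec, dotProduct, Complex.im_sum] using congrArg Complex.im (congrFun hw i)

theorem div_eq_div_of_map_mulVec_eq_zero (hH : H.IsSymm) (hoff : ∀ i j, i ≠ j → H i j ≤ 0)
    (hWpos : ∀ i, 0 < W i) (hW : H *ᵥ W = 0) {w : n → ℂ} (hw : H.map (↑) *ᵥ w = 0) {i j : n}
    (hij : ReflTransGen (fun a b => H a b ≠ 0) i j) : w i / W i = w j / W j := by
  induction hij with
  | refl => rfl
  | tail _ hbc ih =>
    refine ih.trans (Complex.ext ?_ ?_)
    · simpa using
        div_eq_div_of_mulVec_eq_zero hH hoff hWpos hW (mulVec_re_eq_zero_of_map hw) hbc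
    · simpa using
        div_eq_div_of_mulVec_eq_zero hH hoff hWpos hW (mulVec_im_eq_zero_of_map hw) hbc

theorem mulVec_sector_eq_zero {α : Type*} [DecidableEq α] (f : n → α)
    (hf : ∀ i j, H i j ≠ 0 → f i = f j) (hW : H *ᵥ W = 0) (N : α) :
    H *ᵥ (fun i => if f i = N then W i else 0) = 0 := by
  ext i
  have hterm (j : n) :
      H i j * (if f j = N then W j else 0) = if f i = N then H i j * W j else 0 := by
    by_cases hij : H i j = 0
    · simp [hij]
    · simp [hf i j hij]
  simp only [mulVec, dotProduct, hterm, sum_ite_irrel, sum_const_zero]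
  split_ifs
  · exact congrFun hW i
  · rfl

theorem map_mulVec_eq_zero_and_sector_iff (hH : H.IsSymm) (hoff : ∀ i j, i ≠ j → H i j ≤ 0)
    (hWpos : ∀ i, 0 < W i) (hW : H *ᵥ W = 0) {α : Type*} [DecidableEq α] (f : n → α)
    (hf : ∀ i j, H i j ≠ 0 → f i = f j)
    (hconn : ∀ i j, f i = f j → ReflTransGen (fun a b => H a b ≠ 0) i j)
    (N : α) (w : n → ℂ) :
    (H.map (↑) *ᵥ w = 0 ∧ ∀ i, f i ≠ N → w i = 0) ↔
      ∃ a : ℂ, w = a • fun i => (((if f i = N then W i else 0 : ℝ)) : ℂ) := by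
  constructor
  · rintro ⟨hw, hsupp⟩
    by_cases hN : ∃ i₀, f i₀ = N
    · obtain ⟨i₀, hi₀⟩ := hN
      refine ⟨w i₀ / W i₀, funext fun i => ?_⟩
      by_cases hi : f i = N
      · have hratio := div_eq_div_of_map_mulVec_eq_zero hH hoff hWpos hW hw
          (hconn i₀ i (hi₀.trans hi.symm))
        have hWi : (W i : ℂ) ≠ 0 := Complex.ofReal_ne_zero.mpr (hWpos i).ne'
        simp only [hi, if_true, Pi.smul_apply, smul_eq_mul, hratio]
        field_simp
      · simp [hi, hsupp i hi]
    · push Not at hN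
      exact ⟨0, funext fun i => by simp [hsupp i (hN i)]⟩
  · rintro ⟨a, rfl⟩
    refine ⟨?_, fun i hi => by simp [hi]⟩
    ext i
    have h0 := RingHom.map_mulVec Complex.ofRealHom H (fun i => if f i = N then W i else 0) i
    rw [mulVec_sector_eq_zero f hf hW N] at h0
    rw [mulVec_smul, Pi.smul_apply, smul_eq_mul, Pi.zero_apply]
    exact mul_eq_zero_of_right a h0.symm

end PerronFrobenius

section SingleSite

variable {K : ℕ}

/-- `ladderCoeff K n = √((n + 1)(2S − n))` is the matrix element of `S⁻` from `|S − n⟩` to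
`|S − n − 1⟩` (with `K = 2S`). -/
def ladderCoeff (K n : ℕ) : ℝ := √(((n : ℝ) + 1) * (K - n))

theorem ladderCoeff_pos {n : ℕ} (hn : n < K) : 0 < ladderCoeff K n := by
  have : (n : ℝ) < K := by exact_mod_cast hn
  exact Real.sqrt_pos.mpr (by nlinarith)

theorem hopCoeff_mv_of_val_eq_succ {n m : Fin (K + 1)} {a : ℕ} (h : (n : ℕ) = a + 1) :
    hopCoeff K (mv K n) (mv K m) = ladderCoeff K a * ladderCoeff K m := by
  unfold hopCoeff mv ladderCoeff
  rw [h]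
  push_cast
  congr 2 <;> ring

theorem cast_succ_mul_choose_succ {n : ℕ} (hn : n ≤ K) :
    ((n : ℝ) + 1) * K.choose (n + 1) = (K - n) * K.choose n := by
  have h := congrArg (Nat.cast (R := ℝ)) (Nat.choose_succ_right_eq K n)
  push_cast [Nat.cast_sub hn] at h
  linarith

theorem ladderCoeff_mul_sqrt_choose_succ {n : ℕ} (hn : n ≤ K) :
    ladderCoeff K n * √(K.choose (n + 1)) = (K - n) * √(K.choose n) := by
  have hKn : (0 : ℝ) ≤ K - n := sub_nonneg.mpr (by exact_mod_cast hn)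
  rw [ladderCoeff, ← Real.sqrt_mul (by positivity),
    show ((n : ℝ) + 1) * (K - n) * K.choose (n + 1) = (K - n) ^ 2 * K.choose n by
      linear_combination ((K : ℝ) - n) * cast_succ_mul_choose_succ hn,
    Real.sqrt_mul (sq_nonneg _), Real.sqrt_sq hKn]

theorem ladderCoeff_mul_sqrt_choose {n : ℕ} (hn : n ≤ K) :
    ladderCoeff K n * √(K.choose n) = (n + 1) * √(K.choose (n + 1)) := by
  have hKn : (0 : ℝ) ≤ K - n := sub_nonneg.mpr (by exact_mod_cast hn)
  rw [ladderCoeff, ← Real.sqrt_mul (by positivity),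
    show ((n : ℝ) + 1) * (K - n) * K.choose n = ((n : ℝ) + 1) ^ 2 * K.choose (n + 1) by
      linear_combination -((n : ℝ) + 1) * cast_succ_mul_choose_succ hn,
    Real.sqrt_mul (sq_nonneg _), Real.sqrt_sq (by positivity)]

theorem sqrt_one_sub_inv_sq {q : ℝ} (hq0 : 0 < q) (hq1 : q ≤ 1) :
    √(1 - ((q + q⁻¹) / 2)⁻¹ ^ 2) = (q⁻¹ - q) / (q + q⁻¹) := by
  have hq : 0 < q + q⁻¹ := by positivity
  have hsq : 1 - ((q + q⁻¹) / 2)⁻¹ ^ 2 = ((q⁻¹ - q) / (q + q⁻¹)) ^ 2 := by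
    field_simp
    ring
  rw [hsq, Real.sqrt_sq]
  have : q ≤ q⁻¹ := hq1.trans ((one_le_inv₀ hq0).mpr hq1)
  exact div_nonneg (by linarith) hq.le

end SingleSite

section Configurations

variable {Λ : Type*} [DecidableEq Λ] {K : ℕ}

/-- Move one quantum from `y` to `x`. The update saturates, so this is the intended move only
when `c x < K` and `0 < c y`. -/
def transfer (c : QConf Λ K) (x y : Λ) : QConf Λ K :=
  Function.update (Function.update c x ⟨min ((c x : ℕ) + 1) K, by omega⟩) y
    ⟨(c y : ℕ) - 1, by omega⟩

variable {c : QConf Λ K} {x y : Λ}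

theorem transfer_apply_left (hxy : x ≠ y) (hx : (c x : ℕ) < K) :
    (transfer c x y x : ℕ) = c x + 1 := by
  simp only [transfer, Function.update_of_ne hxy, Function.update_self]
  omega

theorem transfer_apply_right : (transfer c x y y : ℕ) = c y - 1 := by
  simp [transfer]

theorem transfer_apply_of_ne {z : Λ} (hzx : z ≠ x) (hzy : z ≠ y) : transfer c x y z = c z := by
  simp [transfer, hzx, hzy]

theorem transfer_apply (hxy : x ≠ y) (hx : (c x : ℕ) < K) (hy : 0 < (c y : ℕ)) (z : Λ) :
    ((transfer c x y z : ℕ) : ℤ) = c z + (if z = x then 1 else 0) - (if z = y then 1 else 0) := by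
  rcases eq_or_ne z x with rfl | hzx
  · simp [transfer_apply_left hxy hx, hxy]
  rcases eq_or_ne z y with rfl | hzy
  · simp only [transfer_apply_right, hzx, if_true, if_false]
    omega
  · simp [transfer_apply_of_ne hzx hzy, hzx, hzy]

theorem ne_transfer (hxy : x ≠ y) (hx : (c x : ℕ) < K) : c ≠ transfer c x y := fun h => by
  have := transfer_apply_left (y := y) hxy hx
  rw [← h] at this
  omega

theorem sum_transfer [Fintype Λ] (hxy : x ≠ y) (hx : (c x : ℕ) < K) (hy : 0 < (c y : ℕ)) :
    ∑ z, (transfer c x y z : ℕ) = ∑ z, (c z : ℕ) := by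
  have : ∑ z, ((transfer c x y z : ℕ) : ℤ) = ∑ z, ((c z : ℕ) : ℤ) := by
    simp [transfer_apply hxy hx hy, sum_add_distrib, sum_sub_distrib]
  exact_mod_cast this

theorem eq_transfer_iff (hxy : x ≠ y) {c' : QConf Λ K} :
    c = transfer c' x y ∧ (c' x : ℕ) < K ∧ 0 < (c' y : ℕ) ↔
      (∀ z, z ≠ x → z ≠ y → c' z = c z) ∧ (c' x : ℕ) + 1 = c x ∧ (c' y : ℕ) = c y + 1 := by
  constructor
  · rintro ⟨rfl, hx, hy⟩
    refine ⟨fun z hzx hzy => (transfer_apply_of_ne hzx hzy).symm,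
      (transfer_apply_left hxy hx).symm, ?_⟩
    rw [transfer_apply_right]
    omega
  · rintro ⟨hframe, hx, hy⟩
    have hcx := (c x).isLt
    have hval := transfer_apply hxy (c := c') (by omega) (by omega)
    refine ⟨funext fun z => Fin.ext (Int.ofNat_inj.mp ?_), by omega, by omega⟩
    rw [hval z]
    rcases eq_or_ne z x with rfl | hzx
    · simp only [hxy, if_true, if_false]
      omega
    rcases eq_or_ne z y with rfl | hzy
    · simp only [hzx, if_true, if_false]
      omega
    simp [hzx, hzy, hframe z hzx hzy]

theorem exists_sum_eq (s : Finset Λ) {N : ℕ} (hN : N ≤ K * #s) :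
    ∃ c : QConf Λ K, ∑ z ∈ s, (c z : ℕ) = N := by
  induction s using Finset.induction_on generalizing N with
  | empty => exact ⟨fun _ => 0, by simp_all⟩
  | insert x s hx ih =>
    rw [card_insert_of_notMem hx, mul_add, mul_one] at hN
    obtain ⟨c, hc⟩ := ih (N := N - min K N) (by omega)
    refine ⟨Function.update c x ⟨min K N, by omega⟩, ?_⟩
    rw [sum_insert hx, Function.update_self,
      sum_congr rfl fun z hz => by rw [Function.update_of_ne (ne_of_mem_of_not_mem hz hx)], hc]
    simp only
    omega

variable {G : Λ → Λ → Prop} {R : QConf Λ K → QConf Λ K → Prop}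

theorem reflTransGen_transfer
    (hR : ∀ c x y, G x y → x ≠ y → (c x : ℕ) < K → 0 < (c y : ℕ) → R c (transfer c x y))
    (hpath : ReflTransGen G x y) :
    ∀ c : QConf Λ K, x ≠ y → (c x : ℕ) < K → 0 < (c y : ℕ) → ReflTransGen R c (transfer c x y) := by
  induction hpath using ReflTransGen.head_induction_on with
  | refl => exact fun c h => absurd rfl h
  | @head a z haz _ ih =>
    intro c hay hca hcy
    rcases eq_or_ne z y with rfl | hzy
    · exact .single (hR c a z haz hay hca hcy)
    rcases eq_or_ne a z with rfl | haz'
    · exact ih c hay hca hcy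
    by_cases hcz : 0 < (c z : ℕ)
    · -- first move a quantum from `z` to `a`, then one from `y` to `z`
      have h1z : (transfer c a z z : ℕ) < K := by
        rw [transfer_apply_right]
        omega
      have h1y : 0 < (transfer c a z y : ℕ) := by rwa [transfer_apply_of_ne hay.symm hzy.symm]
      have hcomp : transfer (transfer c a z) z y = transfer c a y := by
        funext w
        refine Fin.ext (Int.ofNat_inj.mp ?_)
        rw [transfer_apply hzy h1z h1y w, transfer_apply hay hca hcy w,
          transfer_apply haz' hca hcz w]
        split_ifs <;> omega
      exact hcomp ▸ .head (hR c a z haz haz' hca hcz) (ih _ hzy h1z h1y)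
    · -- first bring a quantum from `y` to the empty site `z`, then move it on to `a`
      have hcz' : (c z : ℕ) < K := by omega
      have h2a : (transfer c z y a : ℕ) < K := by rwa [transfer_apply_of_ne haz' hay]
      have h2z : 0 < (transfer c z y z : ℕ) := by
        rw [transfer_apply_left hzy hcz']
        omega
      have hcomp : transfer (transfer c z y) a z = transfer c a y := by
        funext w
        refine Fin.ext (Int.ofNat_inj.mp ?_)
        rw [transfer_apply haz' h2a h2z w, transfer_apply hay hca hcy w,
          transfer_apply hzy hcz' hcy w]
        split_ifs <;> omega
      exact hcomp ▸ (ih c hzy hcz' hcy).tail (hR _ a z haz haz' h2a h2z)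

theorem reflTransGen_of_sum_eq [Fintype Λ] (hG : ∀ x y, ReflTransGen G x y)
    (hR : ∀ c x y, G x y → x ≠ y → (c x : ℕ) < K → 0 < (c y : ℕ) → R c (transfer c x y))
    {c' : QConf Λ K} (hsum : ∑ z, (c z : ℕ) = ∑ z, (c' z : ℕ)) : ReflTransGen R c c' := by
  induction hD : ∑ z, ((c z : ℤ) - c' z).natAbs using Nat.strong_induction_on generalizing c with
  | _ D ih =>
  by_cases hcc : c = c'
  · exact hcc ▸ .refl
  obtain ⟨x, hx⟩ : ∃ x, (c x : ℕ) < c' x := by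
    by_contra! hle
    exact hcc (funext fun z =>
      Fin.ext ((sum_eq_sum_iff_of_le fun z _ => hle z).mp hsum.symm z (mem_univ z)).symm)
  obtain ⟨y, hy⟩ : ∃ y, (c' y : ℕ) < c y := by
    by_contra! hle
    exact hcc (funext fun z =>
      Fin.ext ((sum_eq_sum_iff_of_le fun z _ => hle z).mp hsum z (mem_univ z)))
  have hxy : x ≠ y := by
    rintro rfl
    omega
  have hcx : (c x : ℕ) < K := by
    have := (c' x).isLt
    omega
  have hcy : 0 < (c y : ℕ) := by omega
  refine (reflTransGen_transfer hR (hG x y) c hxy hcx hcy).trans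
    (ih _ ?_ ((sum_transfer hxy hcx hcy).trans hsum) rfl)
  -- the move decreases `|c z - c' z|` at `x` and `y` and changes nothing elsewhere
  rw [← hD]
  refine sum_lt_sum (fun z _ => ?_) ⟨x, mem_univ x, ?_⟩
  · have := transfer_apply hxy hcx hcy z
    rcases eq_or_ne z x with rfl | hzx
    · simp only [hxy, if_true, if_false] at this
      omega
    rcases eq_or_ne z y with rfl | hzy
    · simp only [hzx, if_true, if_false] at this
      omega
    simp only [hzx, hzy, if_false] at this
    omega
  · have := transfer_apply_left (y := y) hxy hcx
    omega

end Configurations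

section Weights

variable {Λ : Type*} {K : ℕ}

def qHeight {d : ℕ} (qs : Fin d → ℝ) (l : Λ → Fin d → ℤ) (z : Λ) : ℝ :=
  ∏ i, qs i ^ l z i

theorem qHeight_pos {d : ℕ} {qs : Fin d → ℝ} (hqs : ∀ i, 0 < qs i) (l : Λ → Fin d → ℤ) (z : Λ) :
    0 < qHeight qs l z :=
  prod_pos fun i _ => zpow_pos (hqs i) _

theorem qHeight_of_eq_add_single {d : ℕ} {qs : Fin d → ℝ} (hqs : ∀ i, qs i ≠ 0)
    {l : Λ → Fin d → ℤ} {i : Fin d} {x y : Λ} (h : l y = l x + Pi.single i 1) :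
    qHeight qs l y = qHeight qs l x * qs i := by
  simp only [qHeight, h, Pi.add_apply, zpow_add₀ (hqs _), prod_mul_distrib]
  congr 1
  rw [prod_eq_single i (fun j _ hj => by simp [hj]) (by simp)]
  simp

variable [Fintype Λ]

def weight (K : ℕ) (Q : Λ → ℝ) (c : QConf Λ K) : ℝ :=
  ∏ z, Q z ^ (c z : ℕ) * √(K.choose (c z))

theorem weight_pos {Q : Λ → ℝ} (hQ : ∀ z, 0 < Q z) (c : QConf Λ K) : 0 < weight K Q c :=
  prod_pos fun z _ => mul_pos (pow_pos (hQ z) _)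
    (Real.sqrt_pos.mpr (by exact_mod_cast Nat.choose_pos (Nat.lt_succ_iff.mp (c z).isLt)))

theorem weight_eq_mul_prod_compl [DecidableEq Λ] (Q : Λ → ℝ) {x y : Λ} (hxy : x ≠ y)
    (c : QConf Λ K) :
    weight K Q c = Q x ^ (c x : ℕ) * √(K.choose (c x)) * (Q y ^ (c y : ℕ) * √(K.choose (c y))) *
      ∏ z ∈ {x, y}ᶜ, Q z ^ (c z : ℕ) * √(K.choose (c z)) := by
  rw [weight, ← prod_mul_prod_compl {x, y}, prod_pair hxy]

end Weights

section BondHamiltonian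

variable {Λ : Type*} [Fintype Λ] [DecidableEq Λ] {K : ℕ}

/-- The matrix of `S⁺_x S⁻_y`. -/
def hop (K : ℕ) (x y : Λ) : Matrix (QConf Λ K) (QConf Λ K) ℝ := fun c' c =>
  if (∀ z, z ≠ x → z ≠ y → c' z = c z) ∧ (c' x : ℕ) + 1 = c x ∧ (c' y : ℕ) = c y + 1 then
    hopCoeff K (mv K (c x)) (mv K (c y))
  else 0

def bondHam (K : ℕ) (Δ : ℝ) (x y : Λ) : Matrix (QConf Λ K) (QConf Λ K) ℝ :=
  diagonal (fun c => ((K : ℝ) / 2) ^ 2 - mv K (c x) * mv K (c y) +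
      (K / 2) * √(1 - Δ⁻¹ ^ 2) * (mv K (c x) - mv K (c y)))
    - (1 / (2 * Δ)) • (hop K x y + hop K y x)

theorem hXY_eq_map_bondHam (K : ℕ) (Δ : ℝ) (x y : Λ) :
    hXY K Δ x y = (bondHam K Δ x y).map (↑) := by
  ext c' c
  by_cases h : c' = c
  · subst h
    simp [hXY, bondHam, hop]
  · have hframe : (∀ z, z ≠ y → z ≠ x → c' z = c z) ↔ ∀ z, z ≠ x → z ≠ y → c' z = c z :=
      forall_congr' fun z => imp.swap
    simp only [hXY, bondHam, hop, h, hframe, Matrix.map_apply, Matrix.sub_apply,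
      Matrix.smul_apply, Matrix.add_apply, if_false, smul_eq_mul]
    rw [diagonal_apply_ne _ h]
    split_ifs <;> tauto

theorem hop_mulVec {x y : Λ} (hxy : x ≠ y) (v : QConf Λ K → ℝ) (c : QConf Λ K) :
    (hop K x y *ᵥ v) c = if (c x : ℕ) < K ∧ 0 < (c y : ℕ) then
      hopCoeff K (mv K (transfer c x y x)) (mv K (transfer c x y y)) * v (transfer c x y)
    else 0 := by
  simp only [mulVec, dotProduct, hop, ← eq_transfer_iff hxy, ite_mul, zero_mul]
  split_ifs with h
  · simp [h]
  · exact sum_eq_zero fun c' _ => if_neg fun h' => h h'.2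

theorem hop_transpose (x y : Λ) (c' c : QConf Λ K) : hop K x y c' c = hop K y x c c' := by
  unfold hop
  by_cases h : (∀ z, z ≠ x → z ≠ y → c' z = c z) ∧ (c' x : ℕ) + 1 = c x ∧ (c' y : ℕ) = c y + 1
  · obtain ⟨hframe, hx, hy⟩ := h
    rw [if_pos ⟨hframe, hx, hy⟩,
      if_pos ⟨fun z hzy hzx => (hframe z hzx hzy).symm, hy.symm, hx.symm⟩,
      hopCoeff_mv_of_val_eq_succ hx.symm, hopCoeff_mv_of_val_eq_succ hy, mul_comm]
  · rw [if_neg h, if_neg fun h' => h ⟨fun z hzx hzy => (h'.1 z hzy hzx).symm, h'.2.2.symm,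
      h'.2.1.symm⟩]

theorem hop_nonneg (x y : Λ) (c' c : QConf Λ K) : 0 ≤ hop K x y c' c := by
  unfold hop hopCoeff
  split_ifs <;> positivity

theorem hop_transfer_pos {x y : Λ} (hxy : x ≠ y) {c : QConf Λ K} (hx : (c x : ℕ) < K)
    (hy : 0 < (c y : ℕ)) : 0 < hop K x y c (transfer c x y) := by
  rw [hop, if_pos ((eq_transfer_iff hxy).mp ⟨rfl, hx, hy⟩),
    hopCoeff_mv_of_val_eq_succ (transfer_apply_left hxy hx), transfer_apply_right]
  exact mul_pos (ladderCoeff_pos hx) (ladderCoeff_pos (by omega))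

theorem sum_eq_of_hop_ne_zero {x y : Λ} (hxy : x ≠ y) {c' c : QConf Λ K}
    (h : hop K x y c' c ≠ 0) : ∑ z, (c' z : ℕ) = ∑ z, (c z : ℕ) := by
  unfold hop at h
  split_ifs at h with hc
  · obtain ⟨rfl, hx, hy⟩ := (eq_transfer_iff hxy).mpr hc
    exact (sum_transfer hxy hx hy).symm
  · exact absurd rfl h

theorem bondHam_apply_of_ne (Δ : ℝ) (x y : Λ) {c' c : QConf Λ K} (h : c' ≠ c) :
    bondHam K Δ x y c' c = -(1 / (2 * Δ)) * (hop K x y c' c + hop K y x c' c) := by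
  simp [bondHam, diagonal_apply_ne _ h]
  ring

theorem bondHam_comm (Δ : ℝ) (x y : Λ) (c' c : QConf Λ K) :
    bondHam K Δ x y c' c = bondHam K Δ x y c c' := by
  rcases eq_or_ne c' c with rfl | h
  · rfl
  rw [bondHam_apply_of_ne Δ x y h, bondHam_apply_of_ne Δ x y h.symm, hop_transpose x y c' c,
    hop_transpose y x c' c, add_comm]

theorem bondHam_swap_of_ne (Δ : ℝ) (x y : Λ) {c' c : QConf Λ K} (h : c' ≠ c) :
    bondHam K Δ y x c' c = bondHam K Δ x y c' c := by
  rw [bondHam_apply_of_ne Δ x y h, bondHam_apply_of_ne Δ y x h, add_comm]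

theorem bondHam_nonpos_of_ne {Δ : ℝ} (hΔ : 0 ≤ Δ) (x y : Λ) {c' c : QConf Λ K} (h : c' ≠ c) :
    bondHam K Δ x y c' c ≤ 0 := by
  rw [bondHam_apply_of_ne Δ x y h]
  have := hop_nonneg x y c' c
  have := hop_nonneg y x c' c
  exact mul_nonpos_of_nonpos_of_nonneg (neg_nonpos.mpr (by positivity)) (by positivity)

theorem bondHam_transfer_neg {Δ : ℝ} (hΔ : 0 < Δ) {x y : Λ} (hxy : x ≠ y) {c : QConf Λ K}
    (hx : (c x : ℕ) < K) (hy : 0 < (c y : ℕ)) : bondHam K Δ x y c (transfer c x y) < 0 := by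
  rw [bondHam_apply_of_ne Δ x y (ne_transfer hxy hx)]
  have := hop_transfer_pos hxy hx hy
  have := hop_nonneg y x c (transfer c x y)
  exact mul_neg_of_neg_of_pos (neg_neg_of_pos (by positivity)) (by positivity)

theorem sum_eq_of_bondHam_ne_zero (Δ : ℝ) {x y : Λ} (hxy : x ≠ y) {c' c : QConf Λ K}
    (h : bondHam K Δ x y c' c ≠ 0) : ∑ z, (c' z : ℕ) = ∑ z, (c z : ℕ) := by
  rcases eq_or_ne c' c with rfl | hc
  · rfl
  rw [bondHam_apply_of_ne Δ x y hc] at h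
  by_cases h1 : hop K x y c' c = 0
  · exact sum_eq_of_hop_ne_zero hxy.symm fun h2 => h (by rw [h1, h2]; ring)
  · exact sum_eq_of_hop_ne_zero hxy h1

theorem hop_mulVec_weight (Q : Λ → ℝ) {x y : Λ} (hxy : x ≠ y) (c : QConf Λ K) :
    Q y * (hop K x y *ᵥ weight K Q) c = Q x * ((K - c x) * c y) * weight K Q c := by
  rw [hop_mulVec hxy]
  split_ifs with h
  · obtain ⟨hx, hy⟩ := h
    obtain ⟨m, hm⟩ : ∃ m, (c y : ℕ) = m + 1 := ⟨c y - 1, by omega⟩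
    have hty : (transfer c x y y : ℕ) = m := by
      rw [transfer_apply_right]
      omega
    have hrest : ∏ z ∈ {x, y}ᶜ, Q z ^ (transfer c x y z : ℕ) * √(K.choose (transfer c x y z)) =
        ∏ z ∈ {x, y}ᶜ, Q z ^ (c z : ℕ) * √(K.choose (c z)) := by
      refine prod_congr rfl fun z hz => ?_
      simp only [mem_compl, mem_insert, mem_singleton, not_or] at hz
      rw [transfer_apply_of_ne hz.1 hz.2]
    rw [weight_eq_mul_prod_compl Q hxy, weight_eq_mul_prod_compl Q hxy c, hrest,
      hopCoeff_mv_of_val_eq_succ (transfer_apply_left hxy hx), transfer_apply_left hxy hx, hty,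
      hm]
    have hx' := ladderCoeff_mul_sqrt_choose_succ hx.le
    have hy' := ladderCoeff_mul_sqrt_choose (K := K) (n := m) (by omega)
    push_cast
    linear_combination (Q y * Q x ^ ((c x : ℕ) + 1) * Q y ^ m *
      ∏ z ∈ {x, y}ᶜ, Q z ^ (c z : ℕ) * √(K.choose (c z))) *
      (ladderCoeff K m * √(K.choose m) * hx' + ((K : ℝ) - c x) * √(K.choose (c x)) * hy')
  · have : ((K : ℝ) - c x) * c y = 0 := by
      rcases not_and_or.mp h with h | h
      · rw [show (c x : ℕ) = K by have := (c x).isLt; omega, sub_self, zero_mul]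
      · rw [show (c y : ℕ) = 0 by omega, Nat.cast_zero, mul_zero]
    rw [this]
    ring

theorem bondHam_mulVec_weight {q : ℝ} (hq0 : 0 < q) (hq1 : q ≤ 1) {Q : Λ → ℝ}
    (hQ : ∀ z, 0 < Q z) {x y : Λ} (hxy : x ≠ y) (hQxy : Q y = Q x * q) :
    bondHam K ((q + q⁻¹) / 2) x y *ᵥ weight K Q = 0 := by
  ext c
  have hQx := (hQ x).ne'
  have hforward : (hop K x y *ᵥ weight K Q) c = q⁻¹ * ((K - c x) * c y) * weight K Q c := by
    have h := hop_mulVec_weight (K := K) Q hxy c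
    rw [hQxy] at h
    apply mul_left_cancel₀ (mul_ne_zero hQx hq0.ne')
    rw [h]
    field_simp
  have hbackward : (hop K y x *ᵥ weight K Q) c = q * ((K - c y) * c x) * weight K Q c := by
    have h := hop_mulVec_weight (K := K) Q hxy.symm c
    rw [hQxy] at h
    apply mul_left_cancel₀ hQx
    rw [h]
    ring
  simp only [bondHam, sub_mulVec, smul_mulVec, add_mulVec, Pi.sub_apply, Pi.smul_apply,
    Pi.add_apply, mulVec_diagonal, smul_eq_mul, hforward, hbackward, sqrt_one_sub_inv_sq hq0 hq1, mv,
    Pi.zero_apply]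
  field_simp
  ring

end BondHamiltonian

section Hamiltonian

variable {Λ : Type*} [Fintype Λ] [DecidableEq Λ] {K d : ℕ} {B : Fin d → Finset (Λ × Λ)}
  {Δs : Fin d → ℝ}

def ham (K : ℕ) (B : Fin d → Finset (Λ × Λ)) (Δs : Fin d → ℝ) :
    Matrix (QConf Λ K) (QConf Λ K) ℝ :=
  ∑ i, ∑ p ∈ B i, bondHam K (Δs i) p.1 p.2

theorem ham_apply (c' c : QConf Λ K) :
    ham K B Δs c' c = ∑ i, ∑ p ∈ B i, bondHam K (Δs i) p.1 p.2 c' c := by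
  simp [ham, Matrix.sum_apply]

theorem sum_hXY_eq_map_ham :
    ∑ i, ∑ p ∈ B i, hXY K (Δs i) p.1 p.2 = (ham K B Δs).map (↑) := by
  ext c' c
  simp [ham_apply, hXY_eq_map_bondHam, Matrix.sum_apply]

theorem ham_isSymm : (ham K B Δs).IsSymm :=
  IsSymm.ext fun c' c => by simp only [ham_apply, bondHam_comm _ _ _ c]

theorem ham_nonpos_of_ne (hΔ : ∀ i, 0 ≤ Δs i) {c' c : QConf Λ K} (h : c' ≠ c) :
    ham K B Δs c' c ≤ 0 := by
  rw [ham_apply]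
  exact sum_nonpos fun i _ => sum_nonpos fun p _ => bondHam_nonpos_of_ne (hΔ i) _ _ h

theorem sum_eq_of_ham_ne_zero (hB : ∀ i, ∀ p ∈ B i, p.1 ≠ p.2) {c' c : QConf Λ K}
    (h : ham K B Δs c' c ≠ 0) : ∑ z, (c' z : ℕ) = ∑ z, (c z : ℕ) := by
  contrapose! h
  rw [ham_apply]
  exact sum_eq_zero fun i _ => sum_eq_zero fun p hp =>
    not_not.mp fun hne => h (sum_eq_of_bondHam_ne_zero _ (hB i p hp) hne)

theorem ham_transfer_neg (hΔ : ∀ i, 0 < Δs i) {x y : Λ}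
    (hadj : ∃ i, (x, y) ∈ B i ∨ (y, x) ∈ B i) (hxy : x ≠ y) {c : QConf Λ K}
    (hx : (c x : ℕ) < K) (hy : 0 < (c y : ℕ)) : ham K B Δs c (transfer c x y) < 0 := by
  have hne := ne_transfer hxy hx
  have hnonpos (j : Fin d) (p : Λ × Λ) : bondHam K (Δs j) p.1 p.2 c (transfer c x y) ≤ 0 :=
    bondHam_nonpos_of_ne (hΔ j).le p.1 p.2 hne
  obtain ⟨i, hi⟩ := hadj
  obtain ⟨p, hp, hneg⟩ : ∃ p ∈ B i, bondHam K (Δs i) p.1 p.2 c (transfer c x y) < 0 := by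
    have := bondHam_transfer_neg (hΔ i) hxy hx hy
    rcases hi with h | h
    · exact ⟨_, h, this⟩
    · exact ⟨_, h, (bondHam_swap_of_ne _ x y hne).trans_lt this⟩
  rw [ham_apply, ← sum_const_zero (s := (univ : Finset (Fin d)))]
  refine sum_lt_sum (fun j _ => sum_nonpos fun p _ => hnonpos j p) ⟨i, mem_univ i, ?_⟩
  exact (sum_lt_sum (fun p _ => hnonpos i p) ⟨p, hp, hneg⟩).trans_eq sum_const_zero

theorem ham_mulVec_weight {qs : Fin d → ℝ} (hqs : ∀ i, 0 < qs i ∧ qs i ≤ 1)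
    (hrel : ∀ i, Δs i = (qs i + (qs i)⁻¹) / 2) {l : Λ → Fin d → ℤ}
    (hheight : ∀ i, ∀ p ∈ B i, l p.2 = l p.1 + Pi.single i 1) (hB : ∀ i, ∀ p ∈ B i, p.1 ≠ p.2) :
    ham K B Δs *ᵥ weight K (qHeight qs l) = 0 := by
  simp only [ham, sum_mulVec]
  refine sum_eq_zero fun i _ => sum_eq_zero fun p hp => ?_
  rw [hrel i]
  exact bondHam_mulVec_weight (hqs i).1 (hqs i).2 (qHeight_pos (fun j => (hqs j).1) l) (hB i p hp)
    (qHeight_of_eq_add_single (fun j => (hqs j).1.ne') (hheight i p hp))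

end Hamiltonian

section Sectors

variable {Λ : Type*} [Fintype Λ] {K : ℕ}

theorem sum_mv (c : QConf Λ K) :
    ∑ x, mv K (c x) = K * Fintype.card Λ / 2 - ((∑ x, (c x : ℕ) : ℕ) : ℝ) := by
  simp only [mv, sum_sub_distrib, sum_const, card_univ, nsmul_eq_mul, Nat.cast_sum]
  ring

theorem s3tot_mulVec [DecidableEq Λ] (ψ : QConf Λ K → ℂ) (c : QConf Λ K) :
    (s3tot K *ᵥ ψ) c = ((∑ x, mv K (c x) : ℝ) : ℂ) * ψ c := by
  simp [s3tot, mulVec, dotProduct]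

theorem s3tot_mulVec_eq_smul_iff [DecidableEq Λ] (N : ℕ) (ψ : QConf Λ K → ℂ) :
    s3tot K *ᵥ ψ = (((K * Fintype.card Λ : ℝ) / 2 - N : ℝ) : ℂ) • ψ ↔
      ∀ c, ∑ x, (c x : ℕ) ≠ N → ψ c = 0 := by
  simp only [funext_iff, s3tot_mulVec, sum_mv, Pi.smul_apply, smul_eq_mul]
  refine forall_congr' fun c => ?_
  rw [← sub_eq_zero, ← sub_mul, mul_eq_zero, ← Complex.ofReal_sub, Complex.ofReal_eq_zero,
    or_iff_not_imp_left]
  simp only [sub_sub_sub_cancel_left, sub_eq_zero, Nat.cast_inj, ne_eq]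
  rw [eq_comm]

theorem asw_eq {d : ℕ} (qs : Fin d → ℝ) (l : Λ → Fin d → ℤ) (N : ℕ) :
    asw K d qs l N =
      fun c => (((if ∑ x, (c x : ℕ) = N then weight K (qHeight qs l) c else 0 : ℝ)) : ℂ) := by
  funext c
  unfold asw weight qHeight
  split_ifs <;> simp

end Sectors

end S1

theorem stmt1 {Λ : Type*} [Fintype Λ] [DecidableEq Λ] (twoS : ℕ)
    (d : ℕ) (B : Fin d → Finset (Λ × Λ))
    (hconn : ∀ x y : Λ,
      Relation.ReflTransGen (fun u v => ∃ i, (u, v) ∈ B i ∨ (v, u) ∈ B i) x y)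
    (l : Λ → Fin d → ℤ) (hheight : ∀ i : Fin d, ∀ p ∈ B i, l p.2 = l p.1 + Pi.single i 1)
    (Δs : Fin d → ℝ) (hΔs : ∀ i, 1 ≤ Δs i)
    (qs : Fin d → ℝ) (hqs : ∀ i, 0 < qs i ∧ qs i ≤ 1)
    (hrel : ∀ i, Δs i = (qs i + (qs i)⁻¹) / 2)
    (N : ℕ) (hN : N ≤ twoS * Fintype.card Λ) :
    (∀ ψ : S1.QConf Λ twoS → ℂ,
      (Matrix.mulVec (∑ i : Fin d, ∑ p ∈ B i, S1.hXY twoS (Δs i) p.1 p.2) ψ = 0 ∧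
        Matrix.mulVec (S1.s3tot twoS) ψ =
          (((twoS * Fintype.card Λ : ℝ) / 2 - (N : ℝ) : ℝ) : ℂ) • ψ)
      ↔ ∃ a : ℂ, ψ = a • S1.asw twoS d qs l N) ∧
    S1.asw twoS d qs l N ≠ 0 := by
  open S1 in
  have hΔ (i : Fin d) : 0 < Δs i := one_pos.trans_le (hΔs i)
  have hB (i : Fin d) (p : Λ × Λ) (hp : p ∈ B i) : p.1 ≠ p.2 := fun h => by
    simpa [h] using congrFun (hheight i p hp) i
  have hW := weight_pos (K := twoS) (qHeight_pos (fun i => (hqs i).1) l)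
  rw [sum_hXY_eq_map_ham, asw_eq]
  refine ⟨fun ψ => ?_, ?_⟩
  · rw [s3tot_mulVec_eq_smul_iff]
    exact map_mulVec_eq_zero_and_sector_iff ham_isSymm
      (fun _ _ => ham_nonpos_of_ne fun i => (hΔ i).le) hW
      (ham_mulVec_weight hqs hrel hheight hB) (fun c => ∑ z, (c z : ℕ))
      (fun _ _ => sum_eq_of_ham_ne_zero hB)
      (fun _ _ => reflTransGen_of_sum_eq hconn fun _ _ _ hadj hxy hx hy =>
        (ham_transfer_neg hΔ hadj hxy hx hy).ne) N ψ
  · obtain ⟨c₀, hc₀⟩ := exists_sum_eq (K := twoS) Finset.univ (N := N) (by simpa using hN)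
    intro h
    simpa [hc₀, (hW c₀).ne'] using congrFun h c₀
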